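/- arXiv:2212.03798 — 3 statements merged into one kernel-verified Lean document; each statement's English description precedes it below -/
import Mathlib

section
/- (Optimism of the windowed rested approximation.) Let $\mu : \mathbb{N} \to [0,1]$ be non-decreasing and concave with increments $\gamma(n) = \mu(n+1) - \mu(n)$. For integers $t \ge 1$, $N \ge 2$ with $N \le t - 1$, and window $1 \le h \le \lfloor N/2 \rfloor$, define $\widetilde{\mu}^h(t) = \frac{1}{h} \sum_{l=N-h+1}^{N} \left(\mu(l) + (t - l)\frac{\mu(l) - \mu(l - h)}{h}\right)$. Then $\widetilde{\mu}^h(t) \ge \mu(t)$. -/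
/-!
By concavity the increments `μ (n + 1) - μ n` are non-increasing. Hence the secant slope
`(μ l - μ (l - h)) / h` over the window ending at `l` is at least the increment at `l`, which in
turn bounds every later increment, so extrapolating linearly from `l` with that slope overshoots
`μ t`. Averaging these bounds over the `h` values of `l` keeps the inequality.
-/

open Finset

section ConcaveSequence

variable {𝕜 : Type*} [Field 𝕜] [LinearOrder 𝕜] [IsStrictOrderedRing 𝕜] {f : ℕ → 𝕜}

theorem sub_le_mul_sub_of_antitone_sub (hf : Antitone fun n ↦ f (n + 1) - f n) {a b : ℕ}
    (hab : a ≤ b) : f b - f a ≤ ((b : 𝕜) - a) * (f (a + 1) - f a) := by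
  rw [← sum_Ico_sub f hab, ← Nat.cast_sub hab, ← Nat.card_Ico, ← nsmul_eq_mul]
  exact sum_le_card_nsmul _ _ _ fun i hi ↦ hf (mem_Ico.mp hi).1

theorem mul_sub_le_sub_of_antitone_sub (hf : Antitone fun n ↦ f (n + 1) - f n) {a b : ℕ}
    (hab : a ≤ b) : ((b : 𝕜) - a) * (f (b + 1) - f b) ≤ f b - f a := by
  rw [← sum_Ico_sub f hab, ← Nat.cast_sub hab, ← Nat.card_Ico, ← nsmul_eq_mul]
  exact card_nsmul_le_sum _ _ _ fun i hi ↦ hf (mem_Ico.mp hi).2.le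

theorem le_add_mul_slope_of_antitone_sub (hf : Antitone fun n ↦ f (n + 1) - f n) {h l t : ℕ}
    (hh : 0 < h) (hhl : h ≤ l) (hlt : l ≤ t) :
    f t ≤ f l + ((t : 𝕜) - l) * (f l - f (l - h)) / h := by
  have hh' : (0 : 𝕜) < h := by exact_mod_cast hh
  have hslope : f (l + 1) - f l ≤ (f l - f (l - h)) / h := by
    rw [le_div_iff₀ hh', mul_comm]
    simpa [Nat.cast_sub hhl] using mul_sub_le_sub_of_antitone_sub hf (Nat.sub_le l h)
  have htl : (0 : 𝕜) ≤ t - l := sub_nonneg.mpr (by exact_mod_cast hlt)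
  calc f t ≤ f l + ((t : 𝕜) - l) * (f (l + 1) - f l) := by
        linarith [sub_le_mul_sub_of_antitone_sub hf hlt]
    _ ≤ f l + ((t : 𝕜) - l) * ((f l - f (l - h)) / h) := by gcongr
    _ = f l + ((t : 𝕜) - l) * (f l - f (l - h)) / h := by ring

end ConcaveSequence

theorem stmt_11_general (μ : ℕ → ℝ)
    (hconc : ∀ n, μ (n + 2) - μ (n + 1) ≤ μ (n + 1) - μ n)
    (t N h : ℕ) (hNt : N ≤ t - 1)
    (hh1 : 1 ≤ h) (hh2 : h ≤ N / 2) :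
    μ t ≤ (1 / (h : ℝ)) * ∑ l ∈ Finset.Icc (N - h + 1) N,
      (μ l + ((t : ℝ) - (l : ℝ)) * (μ l - μ (l - h)) / (h : ℝ)) := by
  have hγ : Antitone fun n ↦ μ (n + 1) - μ n := antitone_nat_of_succ_le hconc
  have hcard : #(Icc (N - h + 1) N) = h := by rw [Nat.card_Icc]; omega
  have hbound : #(Icc (N - h + 1) N) • μ t ≤ ∑ l ∈ Icc (N - h + 1) N,
      (μ l + ((t : ℝ) - l) * (μ l - μ (l - h)) / h) :=
    card_nsmul_le_sum _ _ _ fun l hl ↦ le_add_mul_slope_of_antitone_sub hγ hh1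
      (by grind [Nat.div_mul_le_self N 2]) (by grind)
  rw [hcard, nsmul_eq_mul] at hbound
  rw [one_div, inv_mul_eq_div, le_div_iff₀ (by positivity), mul_comm]
  exact hbound

theorem stmt_11 (μ : ℕ → ℝ) (hrange : ∀ n, μ n ∈ Set.Icc (0 : ℝ) 1)
    (hincr : ∀ n, 0 ≤ μ (n + 1) - μ n)
    (hconc : ∀ n, μ (n + 2) - μ (n + 1) ≤ μ (n + 1) - μ n)
    (t N h : ℕ) (ht : 1 ≤ t) (hN : 2 ≤ N) (hNt : N ≤ t - 1)
    (hh1 : 1 ≤ h) (hh2 : h ≤ N / 2) :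
    μ t ≤ (1 / (h : ℝ)) * ∑ l ∈ Finset.Icc (N - h + 1) N,
      (μ l + ((t : ℝ) - (l : ℝ)) * (μ l - μ (l - h)) / (h : ℝ)) :=
  stmt_11_general μ hconc t N h hNt hh1 hh2
end

section
/- (Bias of the windowed rested approximation.) Under the same assumptions, for $N \ge 2$ and $1 \le h \le \lfloor N/2 \rfloor$, the approximation satisfies $\widetilde{\mu}^h(t) - \mu(N+1) \le \frac{1}{2}(2t - 2N + h - 1)\,\gamma(N - 2h + 1)$. -/
/-!
Each summand of the windowed approximation overshoots `μ (N + 1)` by at most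
`(t - l) γ(N - 2h + 1)`: its value `μ l` is at most `μ (N + 1)` by monotonicity, and its slope
`(μ l - μ (l - h)) / h` is an average of increments at indices `≥ l - h ≥ N - 2h + 1`, each at
most `γ(N - 2h + 1)` by concavity. Averaging `t - l` over the window `N - h < l ≤ N` gives
`t - N + (h - 1) / 2`.
-/

open Finset

lemma sub_le_mul_increment_of_antitone {μ : ℕ → ℝ} (hγ : Antitone fun n ↦ μ (n + 1) - μ n)
    {a b : ℕ} (hba : b ≤ a) (k : ℕ) : μ (a + k) - μ a ≤ k * (μ (b + 1) - μ b) := by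
  have htel := sum_range_sub (fun i ↦ μ (a + i)) k
  simp only [add_zero, ← add_assoc] at htel
  rw [← htel]
  simpa using sum_le_card_nsmul (range k) _ _ fun i _ ↦ hγ (by omega : b ≤ a + i)

lemma sum_Icc_sub_cast (t : ℝ) {N h : ℕ} (hhN : h ≤ N) :
    ∑ l ∈ Icc (N - h + 1) N, (t - l) = h * (t - N) + h * (h - 1) / 2 := by
  induction h with
  | zero => simp
  | succ h ih =>
    rw [show N - (h + 1) + 1 = N - h by omega,
      ← insert_Icc_add_one_left_eq_Icc (by omega : N - h ≤ N), sum_insert (by simp),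
      ih (by omega), Nat.cast_sub (by omega : h ≤ N)]
    push_cast
    ring

lemma windowed_summand_le {μ : ℕ → ℝ} (hμ : Monotone μ) (hγ : Antitone fun n ↦ μ (n + 1) - μ n)
    {t N h l : ℕ} (hNt : N ≤ t) (hh : 0 < h) (hl : l ∈ Icc (N - h + 1) N) (h2N : 2 * h ≤ N) :
    μ l + ((t : ℝ) - l) * (μ l - μ (l - h)) / h ≤
      μ (N + 1) + ((t : ℝ) - l) * (μ (N - 2 * h + 2) - μ (N - 2 * h + 1)) := by
  rw [mem_Icc] at hl
  have hvalue : μ l ≤ μ (N + 1) := hμ (by omega)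
  have hslope : μ l - μ (l - h) ≤ h * (μ (N - 2 * h + 2) - μ (N - 2 * h + 1)) := by
    have := sub_le_mul_increment_of_antitone hγ (by omega : N - 2 * h + 1 ≤ l - h) h
    rwa [Nat.sub_add_cancel (by omega : h ≤ l)] at this
  have htl : (0 : ℝ) ≤ t - l := sub_nonneg.mpr (by exact_mod_cast (by omega : l ≤ t))
  have hh' : (0 : ℝ) < h := by exact_mod_cast hh
  rw [mul_div_assoc]
  gcongr
  exact (div_le_iff₀' hh').mpr hslope

theorem stmt_12_general (μ : ℕ → ℝ)
    (hincr : ∀ n, 0 ≤ μ (n + 1) - μ n)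
    (hconc : ∀ n, μ (n + 2) - μ (n + 1) ≤ μ (n + 1) - μ n)
    (t N h : ℕ) (hNt : N + 1 ≤ t)
    (hh1 : 1 ≤ h) (hh2 : h ≤ N / 2) :
    (1 / (h : ℝ)) * (∑ l ∈ Finset.Icc (N - h + 1) N,
        (μ l + ((t : ℝ) - (l : ℝ)) * (μ l - μ (l - h)) / (h : ℝ))) - μ (N + 1) ≤
      (1 / 2) * (2 * (t : ℝ) - 2 * (N : ℝ) + (h : ℝ) - 1) *
        (μ (N - 2 * h + 2) - μ (N - 2 * h + 1)) := by
  have hμ : Monotone μ := monotone_nat_of_le_succ fun n ↦ sub_nonneg.mp (hincr n)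
  have hγ : Antitone fun n ↦ μ (n + 1) - μ n := antitone_nat_of_succ_le hconc
  have h2N : 2 * h ≤ N := by omega
  have hh : (0 : ℝ) < h := by exact_mod_cast hh1
  set g := μ (N - 2 * h + 2) - μ (N - 2 * h + 1)
  have hsum : ∑ l ∈ Icc (N - h + 1) N, (μ l + ((t : ℝ) - l) * (μ l - μ (l - h)) / h) ≤
      h * μ (N + 1) + (h * (t - N) + h * (h - 1) / 2) * g := by
    refine (sum_le_sum fun l hl ↦ windowed_summand_le hμ hγ (by omega) (by omega) hl h2N).trans_eq ?_
    rw [sum_add_distrib, sum_const, Nat.card_Icc, ← sum_mul, sum_Icc_sub_cast _ (by omega),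
      show N + 1 - (N - h + 1) = h by omega, nsmul_eq_mul]
  calc _ ≤ 1 / (h : ℝ) * (h * μ (N + 1) + (h * (t - N) + h * (h - 1) / 2) * g) - μ (N + 1) := by
        gcongr
    _ = _ := by field_simp; ring

theorem stmt_12 (μ : ℕ → ℝ) (hrange : ∀ n, μ n ∈ Set.Icc (0 : ℝ) 1)
    (hincr : ∀ n, 0 ≤ μ (n + 1) - μ n)
    (hconc : ∀ n, μ (n + 2) - μ (n + 1) ≤ μ (n + 1) - μ n)
    (t N h : ℕ) (hN : 2 ≤ N) (hNt : N + 1 ≤ t)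
    (hh1 : 1 ≤ h) (hh2 : h ≤ N / 2) :
    (1 / (h : ℝ)) * (∑ l ∈ Finset.Icc (N - h + 1) N,
        (μ l + ((t : ℝ) - (l : ℝ)) * (μ l - μ (l - h)) / (h : ℝ))) - μ (N + 1) ≤
      (1 / 2) * (2 * (t : ℝ) - 2 * (N : ℝ) + (h : ℝ) - 1) *
        (μ (N - 2 * h + 2) - μ (N - 2 * h + 1)) :=
  stmt_12_general μ hincr hconc t N h hNt hh1 hh2
end

section
/- (Optimality of the oracle constant policy in rested non-decreasing bandits.) Consider $K$ arms with non-decreasing payoff functions $\mu_i : \mathbb{N}_{\ge 1} \to [0,1]$. For any sequence of pulls $(I_1, \dots, I_T) \in [K]^T$, the collected total payoff $\sum_{t=1}^T \mu_{I_t}(N_{I_t, t})$, where $N_{i,t} = |\{s \le t : I_s = i\}|$, is at most $\max_{i \in [K]} \sum_{l=1}^{T} \mu_i(l)$, i.e., the constant policy playing a single best arm is optimal. -/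
/-!
Group the rounds by arm: if arm `i` is pulled `nᵢ` times in total, its pulls collect exactly
`μᵢ(1) + ⋯ + μᵢ(nᵢ)`, and `∑ nᵢ = T`. Since `μᵢ` is non-decreasing, the average of its first `nᵢ`
values is at most the average of its first `T` values (Chebyshev's sum inequality), so the total
payoff is at most `∑ (nᵢ / T) Sᵢ ≤ max Sᵢ`, where `Sᵢ = μᵢ(1) + ⋯ + μᵢ(T)`.
-/

open Finset

theorem Monotone.mul_sum_Icc_le {α : Type*} [Semiring α] [LinearOrder α] [IsStrictOrderedRing α]
    [ExistsAddOfLE α] {g : ℕ → α} (hg : Monotone g) {n T : ℕ} (hn : n ≤ T) :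
    (T : α) * ∑ l ∈ Icc 1 n, g l ≤ n * ∑ l ∈ Icc 1 T, g l := by
  have hanti : Antitone fun l : ℕ => if l ≤ n then (1 : α) else 0 := by
    intro a b hab
    dsimp only
    split_ifs <;> first | omega | simp
  have hfilter : {l ∈ Icc 1 T | l ≤ n} = Icc 1 n := by
    ext l; simp only [mem_filter, mem_Icc]; omega
  have := ((hanti.antivary hg).antivaryOn (Icc 1 T : Set ℕ)).card_mul_sum_le_sum_mul_sum
  simpa [ite_mul, sum_ite, hfilter] using this

section
variable {α : Type*} [DecidableEq α] (I : ℕ → α)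

def pullCount (i : α) (t : ℕ) : ℕ :=
  #{s ∈ Icc 1 t | I s = i}

@[simp] theorem pullCount_zero (i : α) : pullCount I i 0 = 0 := by simp [pullCount]

theorem pullCount_succ (i : α) (t : ℕ) :
    pullCount I i (t + 1) = pullCount I i t + if I (t + 1) = i then 1 else 0 := by
  rw [pullCount, pullCount, ← insert_Icc_right_eq_Icc_add_one (Nat.le_add_left 1 t), filter_insert]
  split_ifs
  · exact card_insert_of_notMem (by simp)
  · rfl

theorem pullCount_le (i : α) (t : ℕ) : pullCount I i t ≤ t :=
  (card_filter_le _ _).trans (by simp)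

theorem sum_pullCount [Fintype α] (t : ℕ) : ∑ i, pullCount I i t = t := by
  induction t with
  | zero => simp
  | succ t ih => simp [pullCount_succ, sum_add_distrib, ih]

theorem sum_Icc_eq_sum_sum_Icc_pullCount {M : Type*} [AddCommMonoid M] [Fintype α]
    (μ : α → ℕ → M) (T : ℕ) :
    ∑ t ∈ Icc 1 T, μ (I t) (pullCount I (I t) t) = ∑ i, ∑ l ∈ Icc 1 (pullCount I i T), μ i l := by
  induction T with
  | zero => simp
  | succ T ih =>
    have last_pull (i : α) : ∑ l ∈ Icc 1 (pullCount I i (T + 1)), μ i l =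
        ∑ l ∈ Icc 1 (pullCount I i T), μ i l +
          if I (T + 1) = i then μ i (pullCount I i T + 1) else 0 := by
      rw [pullCount_succ]
      split_ifs
      · exact sum_Icc_succ_top (Nat.le_add_left 1 _) _
      · simp
    rw [sum_Icc_succ_top (Nat.le_add_left 1 T), ih, pullCount_succ, if_pos rfl]
    simp only [last_pull, sum_add_distrib, sum_ite_eq, mem_univ, if_true]
end

theorem stmt_14_general (K T : ℕ) (hK : 0 < K)
    (μ : Fin K → ℕ → ℝ)
    (hmono : ∀ i, Monotone (μ i))
    (I : ℕ → Fin K)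
    (N : Fin K → ℕ → ℕ)
    (hN : ∀ i t, N i t = ((Finset.Icc 1 t).filter fun s => I s = i).card) :
    ∑ t ∈ Finset.Icc 1 T, μ (I t) (N (I t) t) ≤
      Finset.univ.sup' (Finset.univ_nonempty_iff.mpr (Fin.pos_iff_nonempty.mp hK))
        (fun i => ∑ l ∈ Finset.Icc 1 T, μ i l) := by
  obtain rfl : N = pullCount I := funext₂ hN
  set M := univ.sup' _ fun i => ∑ l ∈ Icc 1 T, μ i l
  rcases T.eq_zero_or_pos with rfl | hT
  · simp [M]
  rw [sum_Icc_eq_sum_sum_Icc_pullCount]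
  refine le_of_mul_le_mul_left ?_ (Nat.cast_pos.mpr hT : (0 : ℝ) < T)
  calc (T : ℝ) * ∑ i, ∑ l ∈ Icc 1 (pullCount I i T), μ i l
      = ∑ i, (T : ℝ) * ∑ l ∈ Icc 1 (pullCount I i T), μ i l := mul_sum _ _ _
    _ ≤ ∑ i, (pullCount I i T : ℝ) * ∑ l ∈ Icc 1 T, μ i l :=
        sum_le_sum fun i _ => (hmono i).mul_sum_Icc_le (pullCount_le I i T)
    _ ≤ ∑ i, (pullCount I i T : ℝ) * M := by
        gcongr with i
        exact le_sup' (fun j => ∑ l ∈ Icc 1 T, μ j l) (mem_univ i)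
    _ = T * M := by rw [← sum_mul, ← Nat.cast_sum, sum_pullCount]

theorem stmt_14 (K T : ℕ) (hK : 0 < K)
    (μ : Fin K → ℕ → ℝ) (hrange : ∀ i n, μ i n ∈ Set.Icc (0 : ℝ) 1)
    (hmono : ∀ i, Monotone (μ i))
    (I : ℕ → Fin K)
    (N : Fin K → ℕ → ℕ)
    (hN : ∀ i t, N i t = ((Finset.Icc 1 t).filter fun s => I s = i).card) :
    ∑ t ∈ Finset.Icc 1 T, μ (I t) (N (I t) t) ≤
      Finset.univ.sup' (Finset.univ_nonempty_iff.mpr (Fin.pos_iff_nonempty.mp hK))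
        (fun i => ∑ l ∈ Finset.Icc 1 T, μ i l) :=
  stmt_14_general K T hK μ hmono I N hN
end
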